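/- arXiv:2502.02828 — 6 statements merged into one kernel-verified Lean document; each statement's English description precedes it below -/
import Mathlib

section
/- Let f be analytic on the open unit disk D = {z ∈ ℂ : |z| < 1} with |f(z)| < 1 for all z ∈ D, and write f(z) = ∑_{k=0}^∞ a_k z^k. Let p and λ be real numbers with 0 < p ≤ 1 and 0 < λ. Define R_{λ,p} = (−p − λ + √(λ² + 4pλ))/(2λ − p) if p ≠ 2λ, and R_{λ,p} = 1/3 if p = 2λ. Then for every z ∈ D with |z| = r ≤ R_{λ,p}, one has |f(z)|^p + λ ∑_{k=1}^∞ |a_k| r^k ≤ 1. -/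
/-!
Write `α = ‖a 0‖` and `r = ‖z‖`. Composing `f` with the disk automorphism that sends `a 0` to `0`
and applying the Schwarz lemma gives the Schwarz–Pick bounds `‖f z‖ ≤ (α + r) / (1 + α r)` and
`‖f' 0‖ ≤ 1 - α²`. Averaging `f` over the `n`-th roots of unity and substituting `w = zⁿ` yields a
self-map of the disk with Taylor coefficients `a (n m)`, so Wiener's bound `‖a n‖ ≤ 1 - α²` holds
for every `n ≥ 1`, and the tail sum is at most `(1 - α²) r / (1 - r)`. By Bernoulli's inequality
`‖f z‖ ^ p ≤ 1 - p (1 - ‖f z‖)`, so it remains to show `λ (1 - α²) r / (1 - r) ≤ p (1 - ‖f z‖)`;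
with the Schwarz–Pick bound and `α ≤ 1` this follows from `2 λ r (1 + r) ≤ p (1 - r)²`, and
`R_{λ,p}` is the positive root of the corresponding quadratic.
-/

open Metric Set Finset ComplexConjugate

noncomputable def diskMobius (c w : ℂ) : ℂ := (w - c) / (1 - conj c * w)

lemma normSq_one_sub_conj_mul_sub_normSq_sub (c u : ℂ) :
    Complex.normSq (1 - conj c * u) - Complex.normSq (u - c) =
      (1 - Complex.normSq c) * (1 - Complex.normSq u) := by
  simp only [Complex.normSq_apply, Complex.sub_re, Complex.sub_im, Complex.mul_re,
    Complex.mul_im, Complex.one_re, Complex.one_im, Complex.conj_re, Complex.conj_im]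
  ring

lemma one_sub_norm_mul_norm_le (c u : ℂ) : 1 - ‖c‖ * ‖u‖ ≤ ‖1 - conj c * u‖ := by
  simpa using norm_sub_norm_le (1 : ℂ) (conj c * u)

lemma one_sub_conj_mul_ne_zero {c u : ℂ} (hc : ‖c‖ ≤ 1) (hu : ‖u‖ < 1) :
    1 - conj c * u ≠ 0 := by
  have : 0 < 1 - ‖c‖ * ‖u‖ := by nlinarith [norm_nonneg c, norm_nonneg u]
  exact norm_pos_iff.mp (this.trans_le (one_sub_norm_mul_norm_le c u))

lemma norm_diskMobius_lt_one {c u : ℂ} (hc : ‖c‖ < 1) (hu : ‖u‖ < 1) :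
    ‖diskMobius c u‖ < 1 := by
  have hden := one_sub_conj_mul_ne_zero hc.le hu
  rw [diskMobius, norm_div, div_lt_one (norm_pos_iff.mpr hden), ← sq_lt_sq₀ (norm_nonneg _)
    (norm_nonneg _), Complex.sq_norm, Complex.sq_norm, ← sub_pos,
    normSq_one_sub_conj_mul_sub_normSq_sub, ← Complex.sq_norm, ← Complex.sq_norm]
  exact mul_pos (by nlinarith [norm_nonneg c]) (by nlinarith [norm_nonneg u])

lemma diskMobius_self (c : ℂ) : diskMobius c c = 0 := by simp [diskMobius]

lemma hasDerivAt_diskMobius_self {c : ℂ} (hc : ‖c‖ < 1) :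
    HasDerivAt (diskMobius c) (1 - Complex.normSq c : ℂ)⁻¹ c := by
  have hden : 1 - conj c * c ≠ 0 := one_sub_conj_mul_ne_zero hc.le hc
  have h : HasDerivAt (diskMobius c)
      ((1 * (1 - conj c * c) - (c - c) * -(conj c * 1)) / (1 - conj c * c) ^ 2) c :=
    ((hasDerivAt_id' c).sub_const c).div (((hasDerivAt_id' c).const_mul (conj c)).const_sub 1) hden
  convert h using 1
  rw [Complex.normSq_eq_conj_mul_self]
  field_simp
  ring

lemma differentiableOn_diskMobius {c : ℂ} (hc : ‖c‖ < 1) :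
    DifferentiableOn ℂ (diskMobius c) (ball 0 1) := by
  refine (differentiableOn_id.sub_const c).div
    ((differentiableOn_const 1).sub ((differentiableOn_const _).mul differentiableOn_id)) ?_
  intro w hw
  exact one_sub_conj_mul_ne_zero hc.le (mem_ball_zero_iff.mp hw)

lemma mul_one_add_le_add_of_sq_le {α t r : ℝ} (hαt : α * t ≤ 1) (hr : 0 ≤ r)
    (h : (1 - r ^ 2) * (1 - α * t) ^ 2 ≤ (1 - α ^ 2) * (1 - t ^ 2)) :
    t * (1 + α * r) ≤ α + r := by
  -- the difference of the two sides of `h` factors as `P * Q` with `P ≤ Q`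
  have hPQ : ((1 + α * r) * t - (α + r)) * ((1 - α * r) * t - (α - r)) ≤ 0 := by nlinarith
  have hQP : (1 + α * r) * t - (α + r) ≤ (1 - α * r) * t - (α - r) := by nlinarith
  by_contra! hP
  nlinarith

lemma norm_mul_one_add_le_of_norm_diskMobius_le {c u : ℂ} {r : ℝ} (hc : ‖c‖ < 1) (hu : ‖u‖ < 1)
    (hr : r ≤ 1) (h : ‖diskMobius c u‖ ≤ r) : ‖u‖ * (1 + ‖c‖ * r) ≤ ‖c‖ + r := by
  have hr0 : 0 ≤ r := (norm_nonneg _).trans h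
  have hden := norm_pos_iff.mpr (one_sub_conj_mul_ne_zero hc.le hu)
  have hnum : ‖u - c‖ ≤ r * ‖1 - conj c * u‖ := by
    rwa [diskMobius, norm_div, div_le_iff₀ hden] at h
  have hsq : Complex.normSq (u - c) ≤ r ^ 2 * Complex.normSq (1 - conj c * u) := by
    rw [← Complex.sq_norm, ← Complex.sq_norm, ← mul_pow]
    exact pow_le_pow_left₀ (norm_nonneg _) hnum 2
  have hlow : (1 - ‖c‖ * ‖u‖) ^ 2 ≤ Complex.normSq (1 - conj c * u) := by
    rw [← Complex.sq_norm]
    exact pow_le_pow_left₀ (by nlinarith [norm_nonneg c, norm_nonneg u])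
      (one_sub_norm_mul_norm_le c u) 2
  have hid := normSq_one_sub_conj_mul_sub_normSq_sub c u
  rw [← Complex.sq_norm c, ← Complex.sq_norm u] at hid
  refine mul_one_add_le_add_of_sq_le (by nlinarith [norm_nonneg c, norm_nonneg u]) hr0 ?_
  nlinarith [mul_le_mul_of_nonneg_left hlow (by nlinarith : 0 ≤ 1 - r ^ 2)]

section SchwarzPick

variable {g : ℂ → ℂ} (hd : DifferentiableOn ℂ g (ball 0 1)) (hg : MapsTo g (ball 0 1) (ball 0 1))
include hd hg

lemma norm_diskMobius_comp_le {w : ℂ} (hw : w ∈ ball 0 1) : ‖diskMobius (g 0) (g w)‖ ≤ ‖w‖ := by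
  have hc : ‖g 0‖ < 1 := mem_ball_zero_iff.mp (hg (mem_ball_self one_pos))
  refine Complex.norm_le_norm_of_mapsTo_ball ((differentiableOn_diskMobius hc).comp hd hg)
    ?_ (by simpa using diskMobius_self (g 0)) (mem_ball_zero_iff.mp hw)
  exact fun v hv ↦ ball_subset_closedBall <| mem_ball_zero_iff.mpr <|
    norm_diskMobius_lt_one hc (mem_ball_zero_iff.mp (hg hv))

theorem norm_mul_one_add_le_of_mapsTo_ball {w : ℂ} (hw : w ∈ ball 0 1) :
    ‖g w‖ * (1 + ‖g 0‖ * ‖w‖) ≤ ‖g 0‖ + ‖w‖ :=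
  norm_mul_one_add_le_of_norm_diskMobius_le (mem_ball_zero_iff.mp (hg (mem_ball_self one_pos)))
    (mem_ball_zero_iff.mp (hg hw)) (mem_ball_zero_iff.mp hw).le (norm_diskMobius_comp_le hd hg hw)

theorem norm_deriv_le_one_sub_sq_of_mapsTo_ball : ‖deriv g 0‖ ≤ 1 - ‖g 0‖ ^ 2 := by
  have hc : ‖g 0‖ < 1 := mem_ball_zero_iff.mp (hg (mem_ball_self one_pos))
  have hpos : 0 < 1 - Complex.normSq (g 0) := by
    rw [← Complex.sq_norm]; nlinarith [norm_nonneg (g 0)]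
  have hderiv : HasDerivAt (diskMobius (g 0) ∘ g)
      ((1 - Complex.normSq (g 0) : ℂ)⁻¹ * deriv g 0) 0 :=
    (hasDerivAt_diskMobius_self hc).comp 0
      (hd.differentiableAt (ball_mem_nhds 0 one_pos)).hasDerivAt
  have hschwarz := Complex.norm_deriv_le_one_of_mapsTo_ball
    ((differentiableOn_diskMobius hc).comp hd hg) ?_ one_pos
  · rw [hderiv.deriv, norm_mul, norm_inv, ← Complex.ofReal_one, ← Complex.ofReal_sub,
      Complex.norm_of_nonneg hpos.le, inv_mul_le_iff₀ hpos, mul_one, ← Complex.sq_norm] at hschwarz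
    exact hschwarz
  · intro v hv
    rw [Function.comp_apply, diskMobius_self]
    exact ball_subset_closedBall <| mem_ball_zero_iff.mpr <|
      norm_diskMobius_lt_one hc (mem_ball_zero_iff.mp (hg hv))

end SchwarzPick

section PowerSeries

variable {f : ℂ → ℂ} {a : ℕ → ℂ} (hf : ∀ w ∈ ball 0 1, HasSum (fun k ↦ a k * w ^ k) (f w))
include hf

lemma hasFPowerSeriesOnBall_ofScalars_of_hasSum :
    HasFPowerSeriesOnBall f (FormalMultilinearSeries.ofScalars ℂ a) 0 1 where
  r_le := by
    refine ENNReal.le_of_forall_nnreal_lt fun t ht ↦ ?_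
    have ht : (t : ℂ) ∈ ball 0 1 := by simpa using ht
    refine FormalMultilinearSeries.le_radius_of_tendsto _ (l := 0) ?_
    simpa [FormalMultilinearSeries.ofScalars_norm] using (hf _ ht).summable.tendsto_atTop_zero.norm
  r_pos := one_pos
  hasSum {w} hw := by
    rw [← ENNReal.coe_one, eball_coe, NNReal.coe_one] at hw
    simpa [FormalMultilinearSeries.ofScalars_apply_eq, mul_comm] using hf w hw

lemma differentiableOn_of_hasSum : DifferentiableOn ℂ f (ball 0 1) := by
  simpa [← ENNReal.coe_one, eball_coe] using
    (hasFPowerSeriesOnBall_ofScalars_of_hasSum hf).differentiableOn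

lemma apply_zero_of_hasSum : f 0 = a 0 :=
  (hf 0 (mem_ball_self one_pos)).unique (hasSum_ite_eq 0 (a 0) |>.congr_fun fun k ↦ by
    rcases k with _ | k <;> simp)

lemma deriv_zero_of_hasSum : deriv f 0 = a 1 := by
  simpa [FormalMultilinearSeries.ofScalars_apply_eq] using
    (hasFPowerSeriesOnBall_ofScalars_of_hasSum hf).hasFPowerSeriesAt.hasDerivAt.deriv

end PowerSeries

lemma sum_pow_pow_eq_ite {R : Type*} [CommRing R] [IsDomain R] {ω : R} {n : ℕ}
    (hω : IsPrimitiveRoot ω n) (i : ℕ) :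
    ∑ j ∈ range n, (ω ^ i) ^ j = if n ∣ i then (n : R) else 0 := by
  split_ifs with hni
  · simp [(hω.pow_eq_one_iff_dvd i).mpr hni]
  · have hne : ω ^ i - 1 ≠ 0 := sub_ne_zero.mpr fun h ↦ hni ((hω.pow_eq_one_iff_dvd i).mp h)
    refine (mul_eq_zero.mp ?_).resolve_right hne
    rw [geom_sum_mul, ← pow_mul, mul_comm, pow_mul, hω.pow_eq_one, one_pow, sub_self]

lemma hasSum_natCast_mul_coeff_mul_pow_mul {K : Type*} [Field K] [TopologicalSpace K]
    [IsTopologicalRing K] {f : K → K} {a : ℕ → K} {ω z : K} {n : ℕ} (hω : IsPrimitiveRoot ω n)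
    (hn : 0 < n) (hf : ∀ j ∈ range n, HasSum (fun k ↦ a k * (ω ^ j * z) ^ k) (f (ω ^ j * z))) :
    HasSum (fun m ↦ n * (a (n * m) * z ^ (n * m))) (∑ j ∈ range n, f (ω ^ j * z)) := by
  have hsum := hasSum_sum hf
  have hfilter : (fun k ↦ ∑ j ∈ range n, a k * (ω ^ j * z) ^ k) =
      fun k ↦ (if n ∣ k then (n : K) else 0) * (a k * z ^ k) := by
    ext k
    rw [← sum_pow_pow_eq_ite hω k, sum_mul]
    refine sum_congr rfl fun j _ ↦ ?_
    rw [mul_pow, ← pow_mul, ← pow_mul, mul_comm j k]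
    ring
  rw [hfilter, ← (mul_right_injective₀ hn.ne').hasSum_iff] at hsum
  · simpa [Function.comp_def] using hsum
  · rintro k hk
    rw [if_neg fun ⟨m, hm⟩ ↦ hk ⟨m, hm.symm⟩, zero_mul]

section CoefficientBound

variable {f : ℂ → ℂ} {a : ℕ → ℂ} (hf : ∀ w ∈ ball 0 1, HasSum (fun k ↦ a k * w ^ k) (f w))
  (hb : MapsTo f (ball 0 1) (ball 0 1)) {n : ℕ} (hn : 0 < n)
include hf hb hn

lemma exists_hasSum_coeff_mul_pow_norm_lt_one {w : ℂ} (hw : w ∈ ball 0 1) :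
    ∃ s, HasSum (fun m ↦ a (n * m) * w ^ m) s ∧ ‖s‖ < 1 := by
  obtain ⟨z, rfl⟩ := IsAlgClosed.exists_pow_nat_eq w hn
  have hz : ‖z‖ < 1 := by
    rw [mem_ball_zero_iff, norm_pow] at hw
    exact (pow_lt_one_iff_of_nonneg (norm_nonneg z) hn.ne').mp hw
  have hω := Complex.isPrimitiveRoot_exp n hn.ne'
  set ω := Complex.exp (2 * Real.pi * Complex.I / n)
  have hmem (j : ℕ) : ω ^ j * z ∈ ball 0 1 := by
    rwa [mem_ball_zero_iff, norm_mul, norm_pow, hω.norm'_eq_one hn.ne', one_pow, one_mul]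
  have hn' : (n : ℂ) ≠ 0 := Nat.cast_ne_zero.mpr hn.ne'
  refine ⟨(n : ℂ)⁻¹ * ∑ j ∈ range n, f (ω ^ j * z), ?_, ?_⟩
  · have := (hasSum_natCast_mul_coeff_mul_pow_mul hω hn fun j _ ↦ hf _ (hmem j)).mul_left
      (n : ℂ)⁻¹
    simpa [← mul_assoc, inv_mul_cancel₀ hn', pow_mul] using this
  · calc ‖(n : ℂ)⁻¹ * ∑ j ∈ range n, f (ω ^ j * z)‖
        ≤ (n : ℝ)⁻¹ * ∑ j ∈ range n, ‖f (ω ^ j * z)‖ := by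
          rw [norm_mul, norm_inv, Complex.norm_natCast]
          gcongr
          exact norm_sum_le _ _
      _ < (n : ℝ)⁻¹ * ∑ j ∈ range n, 1 := by
          gcongr with j
          · exact nonempty_range_iff.mpr hn.ne'
          · exact mem_ball_zero_iff.mp (hb (hmem j))
      _ = 1 := by simp [hn.ne']

lemma exists_hasSum_coeff_mul_pow_mapsTo_ball :
    ∃ g : ℂ → ℂ, (∀ w ∈ ball 0 1, HasSum (fun m ↦ a (n * m) * w ^ m) (g w)) ∧
      MapsTo g (ball 0 1) (ball 0 1) := by
  refine ⟨fun w ↦ ∑' m, a (n * m) * w ^ m, fun w hw ↦ ?_, fun w hw ↦ ?_⟩ <;>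
    obtain ⟨s, hs, hs1⟩ := exists_hasSum_coeff_mul_pow_norm_lt_one hf hb hn hw
  · exact hs.summable.hasSum
  · simp only [hs.tsum_eq]
    exact mem_ball_zero_iff.mpr hs1

theorem norm_coeff_le_one_sub_sq : ‖a n‖ ≤ 1 - ‖a 0‖ ^ 2 := by
  obtain ⟨g, hg, hgb⟩ := exists_hasSum_coeff_mul_pow_mapsTo_ball hf hb hn
  simpa [deriv_zero_of_hasSum hg, apply_zero_of_hasSum hg] using
    norm_deriv_le_one_sub_sq_of_mapsTo_ball (differentiableOn_of_hasSum hg) hgb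

end CoefficientBound

noncomputable def bohrRadius (p lam : ℝ) : ℝ :=
  if p = 2 * lam then 1 / 3 else (-p - lam + Real.sqrt (lam ^ 2 + 4 * p * lam)) / (2 * lam - p)

lemma bohrRadius_spec {p lam : ℝ} (hp : 0 < p) (hlam : 0 < lam) :
    (2 * lam - p) * bohrRadius p lam ^ 2 + 2 * (lam + p) * bohrRadius p lam = p ∧
      -(lam + p) ≤ (2 * lam - p) * bohrRadius p lam := by
  unfold bohrRadius
  split_ifs with hpl
  · constructor <;> nlinarith
  · have hq : 2 * lam - p ≠ 0 := fun h ↦ hpl (by linarith)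
    set s := Real.sqrt (lam ^ 2 + 4 * p * lam)
    have hs : s ^ 2 = lam ^ 2 + 4 * p * lam := Real.sq_sqrt (by positivity)
    have hqR : (2 * lam - p) * ((-p - lam + s) / (2 * lam - p)) = -p - lam + s :=
      mul_div_cancel₀ _ hq
    refine ⟨mul_left_cancel₀ hq ?_, by linarith [Real.sqrt_nonneg (lam ^ 2 + 4 * p * lam)]⟩
    linear_combination ((2 * lam - p) * ((-p - lam + s) / (2 * lam - p)) + s + p + lam) * hqR + hs

lemma two_mul_mul_one_add_le_of_le_bohrRadius {p lam r : ℝ} (hp : 0 < p) (hlam : 0 < lam)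
    (hr0 : 0 ≤ r) (hr : r ≤ bohrRadius p lam) : 2 * lam * r * (1 + r) ≤ p * (1 - r) ^ 2 := by
  obtain ⟨hroot, hlin⟩ := bohrRadius_spec hp hlam
  -- `x ↦ (2λ - p) x + (λ + p)` is affine and nonnegative at `0` and at `bohrRadius p lam`
  have hlin_r : 0 ≤ (2 * lam - p) * r + (lam + p) := by
    rcases le_total 0 (2 * lam - p) with h | h
    · nlinarith
    · nlinarith [mul_le_mul_of_nonpos_left hr h]
  nlinarith [mul_nonneg (sub_nonneg.2 hr) (add_nonneg hlin_r (neg_le_iff_add_nonneg.mp hlin))]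

lemma tsum_mul_pow_succ_le {b : ℕ → ℝ} {M r : ℝ} (hb0 : ∀ k, 0 ≤ b k) (hbM : ∀ k, b k ≤ M)
    (hr0 : 0 ≤ r) (hr1 : r < 1) : ∑' k, b k * r ^ (k + 1) ≤ M * r / (1 - r) := by
  have hgeo := (hasSum_geometric_of_lt_one hr0 hr1).mul_left (M * r)
  have hle (k : ℕ) : b k * r ^ (k + 1) ≤ M * r * r ^ k := by
    rw [pow_succ]
    nlinarith [mul_nonneg (sub_nonneg.2 (hbM k)) (mul_nonneg (pow_nonneg hr0 k) hr0)]
  have hsummable : Summable fun k ↦ b k * r ^ (k + 1) :=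
    .of_nonneg_of_le (fun k ↦ mul_nonneg (hb0 k) (pow_nonneg hr0 _)) hle hgeo.summable
  calc ∑' k, b k * r ^ (k + 1) ≤ ∑' k, M * r * r ^ k := hsummable.tsum_le_tsum hle hgeo.summable
    _ = M * r / (1 - r) := by rw [hgeo.tsum_eq, div_eq_mul_inv]

lemma mul_div_one_sub_le_mul_one_sub {p lam α A r : ℝ} (hlam : 0 ≤ lam) (hα0 : 0 ≤ α)
    (hα1 : α ≤ 1) (hr0 : 0 ≤ r) (hr1 : r < 1) (hA : A * (1 + α * r) ≤ α + r)
    (hrad : 2 * lam * r * (1 + r) ≤ p * (1 - r) ^ 2) :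
    lam * ((1 - α ^ 2) * r / (1 - r)) ≤ p * (1 - A) := by
  have hp : 0 ≤ p :=
    le_of_mul_le_mul_right (by simpa using (by positivity : 0 ≤ 2 * lam * r * (1 + r)).trans hrad)
      (by nlinarith : 0 < (1 - r) ^ 2)
  rw [← mul_div_assoc, div_le_iff₀ (by linarith)]
  refine le_of_mul_le_mul_right ?_ (by nlinarith : 0 < 1 + α * r)
  calc lam * ((1 - α ^ 2) * r) * (1 + α * r)
      = (1 - α) * (lam * r * ((1 + α) * (1 + α * r))) := by ring
    _ ≤ (1 - α) * (lam * r * (2 * (1 + r))) := by gcongr <;> nlinarith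
    _ ≤ (1 - α) * (p * (1 - r) ^ 2) := mul_le_mul_of_nonneg_left (by linarith) (by linarith)
    _ = p * (1 - r) * ((1 - α) * (1 - r)) := by ring
    _ ≤ p * (1 - r) * ((1 - A) * (1 + α * r)) :=
        mul_le_mul_of_nonneg_left (by nlinarith) (by nlinarith)
    _ = p * (1 - A) * (1 - r) * (1 + α * r) := by ring

/-- Bohr-type inequality with two parameters, case 0 < p ≤ 1, 0 < λ:
if f is analytic on the unit disk with |f| < 1 and Taylor coefficients aₖ,
then |f(z)|^p + λ ∑_{k≥1} |aₖ| r^k ≤ 1 for r = |z| ≤ R_{λ,p}. -/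
theorem bohr_two_params_case1
    (f : ℂ → ℂ) (a : ℕ → ℂ)
    (hf : ∀ z ∈ Metric.ball (0 : ℂ) 1, HasSum (fun k : ℕ => a k * z ^ k) (f z))
    (hb : ∀ z ∈ Metric.ball (0 : ℂ) 1, ‖f z‖ < 1)
    (p lam : ℝ) (hp0 : 0 < p) (hp1 : p ≤ 1) (hlam : 0 < lam)
    (R : ℝ)
    (hR : R = if p = 2 * lam then 1 / 3
              else (-p - lam + Real.sqrt (lam ^ 2 + 4 * p * lam)) / (2 * lam - p))
    (z : ℂ) (hz : z ∈ Metric.ball (0 : ℂ) 1)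
    (r : ℝ) (hr : r = ‖z‖) (hrR : r ≤ R) :
    ‖f z‖ ^ p + lam * ∑' k : ℕ, ‖a (k + 1)‖ * r ^ (k + 1) ≤ 1 := by
  have hr0 : 0 ≤ r := hr ▸ norm_nonneg z
  have hr1 : r < 1 := hr ▸ mem_ball_zero_iff.mp hz
  have hmaps : MapsTo f (ball 0 1) (ball 0 1) := fun w hw ↦ mem_ball_zero_iff.mpr (hb w hw)
  have hf0 : f 0 = a 0 := apply_zero_of_hasSum hf
  have hα : ‖a 0‖ < 1 := hf0 ▸ hb 0 (mem_ball_self one_pos)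
  have hpick : ‖f z‖ * (1 + ‖a 0‖ * r) ≤ ‖a 0‖ + r := by
    simpa only [hf0, hr] using
      norm_mul_one_add_le_of_mapsTo_ball (differentiableOn_of_hasSum hf) hmaps hz
  have htail : ∑' k, ‖a (k + 1)‖ * r ^ (k + 1) ≤ (1 - ‖a 0‖ ^ 2) * r / (1 - r) :=
    tsum_mul_pow_succ_le (fun _ ↦ norm_nonneg _)
      (fun k ↦ norm_coeff_le_one_sub_sq hf hmaps k.succ_pos) hr0 hr1
  have hrad := two_mul_mul_one_add_le_of_le_bohrRadius hp0 hlam hr0 (hrR.trans_eq hR)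
  have hbernoulli : ‖f z‖ ^ p ≤ 1 + p * (‖f z‖ - 1) := by
    simpa using rpow_one_add_le_one_add_mul_self (s := ‖f z‖ - 1)
      (by linarith [norm_nonneg (f z)]) hp0.le hp1
  calc ‖f z‖ ^ p + lam * ∑' k, ‖a (k + 1)‖ * r ^ (k + 1)
      ≤ (1 + p * (‖f z‖ - 1)) + lam * ((1 - ‖a 0‖ ^ 2) * r / (1 - r)) :=
        add_le_add hbernoulli (mul_le_mul_of_nonneg_left htail hlam.le)
    _ ≤ (1 + p * (‖f z‖ - 1)) + p * (1 - ‖f z‖) := add_le_add_right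
        (mul_div_one_sub_le_mul_one_sub hlam.le (norm_nonneg _) hα.le hr0 hr1 hpick hrad) _
    _ = 1 := by ring
end

section
/- Let p and λ be real numbers with either (0 < p ≤ 1 and 0 < λ) or (1 < p ≤ 3/2 and 0 < λ ≤ 9p/10). Define R_{λ,p} = (−p − λ + √(λ² + 4pλ))/(2λ − p) if p ≠ 2λ, and R_{λ,p} = 1/3 if p = 2λ. Then for every r with R_{λ,p} < r < 1 there exists a ∈ [0,1) such that ((r + a)/(1 + a r))^p + λ (1 − a²) r/(1 − a r) > 1. (This exhibits, via the Möbius map f(z) = (a − z)/(1 − a z) evaluated at z = −r, the sharpness of the radius R_{λ,p} in the Bohr-type inequality |f(z)|^p + λ ∑_{k=1}^∞ |a_k| r^k ≤ 1.) -/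
/-!
With `u = (r + a) / (1 + a r)`, Bernoulli's inequality gives `u ^ p ≥ 1 + p - p / u`, and
`p / u - p = p (1 - a) (1 - r) / (r + a)`. After cancelling `1 - a`, it suffices that
`p (1 - r) (1 - a r) < λ (1 + a) r (r + a)`. At `a = 1` this reads `p (1 - r)² < 2 λ r (1 + r)`,
which holds exactly beyond the positive root `R` of `(2λ - p) x² + 2 (p + λ) x - p`, and by
continuity it persists for some `a < 1`.
-/

open Filter Topology

/-- Bernoulli's inequality for `u ^ (p + 1)`, divided by `u`. -/
lemma one_add_sub_div_le_rpow {u p : ℝ} (hu : 0 < u) (hp : 0 ≤ p) :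
    1 + p - p / u ≤ u ^ p := by
  have hbern : 1 + (p + 1) * (u - 1) ≤ u ^ p * u := by
    simpa [Real.rpow_add hu] using
      one_add_mul_self_le_rpow_one_add (s := u - 1) (by linarith) (by linarith : 1 ≤ p + 1)
  rw [← mul_le_mul_iff_of_pos_right hu]
  calc (1 + p - p / u) * u = 1 + (p + 1) * (u - 1) := by field_simp; ring
    _ ≤ u ^ p * u := hbern

/-- Rationalizing the numerator gives a form of `R` that also covers the case `p = 2 λ`. -/
lemma bohr_radius_eq {p lam : ℝ} (hp : 0 < p) (hlam : 0 < lam) :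
    (if p = 2 * lam then 1 / 3
      else (-p - lam + Real.sqrt (lam ^ 2 + 4 * p * lam)) / (2 * lam - p)) =
      p / (p + lam + Real.sqrt (lam ^ 2 + 4 * p * lam)) := by
  set s := Real.sqrt (lam ^ 2 + 4 * p * lam)
  have hs : s ^ 2 = lam ^ 2 + 4 * p * lam := Real.sq_sqrt (by positivity)
  have hpos : 0 < p + lam + s := by positivity
  split_ifs with hc
  · have : s = 3 * lam := by
      rw [← Real.sqrt_sq (by linarith : 0 ≤ 3 * lam)]; simp only [s, hc]; ring_nf
    rw [this, hc]; field_simp; ring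
  · have hd : 2 * lam - p ≠ 0 := fun h => hc (by linarith)
    rw [div_eq_div_iff hd hpos.ne']
    linear_combination hs

lemma sq_mul_lt_of_bohr_radius_lt {p lam r : ℝ} (hp : 0 < p) (hlam : 0 < lam)
    (hRr : p / (p + lam + Real.sqrt (lam ^ 2 + 4 * p * lam)) < r) (hr1 : r < 1) :
    p * (1 - r) ^ 2 < 2 * lam * r * (1 + r) := by
  set s := Real.sqrt (lam ^ 2 + 4 * p * lam)
  set R := p / (p + lam + s)
  have hs : s ^ 2 = lam ^ 2 + 4 * p * lam := Real.sq_sqrt (by positivity)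
  have hpos : 0 < p + lam + s := by positivity
  have hR : R * (p + lam + s) = p := div_mul_cancel₀ p hpos.ne'
  have hR1 : R < 1 := by
    rw [div_lt_one hpos]; linarith [Real.sqrt_nonneg (lam ^ 2 + 4 * p * lam)]
  have hR0 : 0 < R := by positivity
  clear_value R s
  have hroot : ((2 * lam - p) * R ^ 2 + 2 * (p + lam) * R - p) * (p + lam + s) ^ 2 = 0 := by
    linear_combination
      ((2 * lam - p) * (R * (p + lam + s) + p) + 2 * (p + lam) * (p + lam + s)) * hR - p * hs
  have hroot' : (2 * lam - p) * R ^ 2 + 2 * (p + lam) * R - p = 0 := by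
    simpa [hpos.ne'] using hroot
  have hfactor : 0 < (2 * lam - p) * (r + R) + 2 * (p + lam) := by
    rcases le_or_gt 0 (2 * lam - p) with hd | hd
    · nlinarith [mul_nonneg hd (by linarith : 0 ≤ r + R)]
    · nlinarith [mul_lt_mul_of_neg_left (by linarith : r + R < 2) hd]
  nlinarith [mul_pos (sub_pos.2 hRr) hfactor]

lemma exists_lt_one_of_sq_mul_lt {p lam r : ℝ} (h : p * (1 - r) ^ 2 < 2 * lam * r * (1 + r)) :
    ∃ a, 0 ≤ a ∧ a < 1 ∧ p * (1 - r) * (1 - a * r) < lam * (1 + a) * r * (r + a) := by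
  have hcont : Continuous fun a => lam * (1 + a) * r * (r + a) - p * (1 - r) * (1 - a * r) := by
    fun_prop
  have hpos : ∀ᶠ a in 𝓝 (1 : ℝ), 0 < lam * (1 + a) * r * (r + a) - p * (1 - r) * (1 - a * r) :=
    hcont.continuousAt.eventually (lt_mem_nhds (by linarith))
  obtain ⟨a, ⟨ha, ha0⟩, ha1⟩ :=
    (((hpos.and (Ioi_mem_nhds one_pos)).filter_mono nhdsWithin_le_nhds).and
      (self_mem_nhdsWithin : ∀ᶠ a in 𝓝[<] (1 : ℝ), a < 1)).exists
  exact ⟨a, ha0.le, ha1, by linarith⟩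

lemma one_lt_mobius_rpow_add {p lam r a : ℝ} (hp : 0 ≤ p) (hr0 : 0 < r) (hr1 : r < 1)
    (ha0 : 0 ≤ a) (ha1 : a < 1)
    (h : p * (1 - r) * (1 - a * r) < lam * (1 + a) * r * (r + a)) :
    1 < ((r + a) / (1 + a * r)) ^ p + lam * (1 - a ^ 2) * r / (1 - a * r) := by
  have hra : 0 < r + a := by linarith
  have hplus : 0 < 1 + a * r := by positivity
  have hminus : 0 < 1 - a * r := by nlinarith
  have hbern := one_add_sub_div_le_rpow (div_pos hra hplus) hp
  have hdiff : p / ((r + a) / (1 + a * r)) - p = p * (1 - a) * (1 - r) / (r + a) := by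
    field_simp; ring
  have hkey : p * (1 - a) * (1 - r) / (r + a) < lam * (1 - a ^ 2) * r / (1 - a * r) := by
    rw [div_lt_div_iff₀ hra hminus]
    nlinarith [mul_lt_mul_of_pos_left h (sub_pos.2 ha1)]
  linarith

/-- Sharpness of the radius R_{λ,p} in the Bohr-type inequality:
for R_{λ,p} < r < 1 there is a ∈ [0,1) with
((r+a)/(1+ar))^p + λ(1-a²)r/(1-ar) > 1. -/
theorem bohr_two_params_sharp
    (p lam : ℝ)
    (h : (0 < p ∧ p ≤ 1 ∧ 0 < lam) ∨
         (1 < p ∧ p ≤ 3 / 2 ∧ 0 < lam ∧ lam ≤ 9 * p / 10))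
    (R : ℝ)
    (hR : R = if p = 2 * lam then 1 / 3
              else (-p - lam + Real.sqrt (lam ^ 2 + 4 * p * lam)) / (2 * lam - p))
    (r : ℝ) (hrR : R < r) (hr1 : r < 1) :
    ∃ a : ℝ, 0 ≤ a ∧ a < 1 ∧
      ((r + a) / (1 + a * r)) ^ p + lam * (1 - a ^ 2) * r / (1 - a * r) > 1 := by
  obtain ⟨hp, hlam⟩ : 0 < p ∧ 0 < lam := by
    rcases h with ⟨hp, -, hlam⟩ | ⟨hp, -, hlam, -⟩ <;> constructor <;> linarith
  rw [bohr_radius_eq hp hlam] at hR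
  have hr0 : 0 < r := hrR.trans_le' (hR ▸ by positivity)
  obtain ⟨a, ha0, ha1, ha⟩ :=
    exists_lt_one_of_sq_mul_lt (sq_mul_lt_of_bohr_radius_lt hp hlam (hR ▸ hrR) hr1)
  exact ⟨a, ha0, ha1, one_lt_mobius_rpow_add hp.le hr0 hr1 ha0 ha1 ha⟩
end

section
/- Let p and λ be real numbers with 0 < p ≤ 1 and 0 < λ, and define r_{λ,p} = (−2λ − p + √(9p² + 4λp + 4λ²))/(4p). Then for every r with r_{λ,p} < r < 1/2 there exists a ∈ [0,1) such that |(a − r)/(1 − a r)|^p + λ (1 − a²) r / ((1 − a r)(1 − 2 a r)) > 1. (This exhibits, via the Möbius map f(z) = (a − z)/(1 − a z) evaluated at z = r, the sharpness of the radius r_{λ,p} in the inequality |f(z)|^p + λ ∑_{k=1}^∞ |f^{(k)}(z)/k!| r^k ≤ 1.) -/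
set_option maxHeartbeats 1000000

/-- Sharpness of the radius r_{λ,p} in the derivative Bohr-type inequality:
for r_{λ,p} < r < 1/2 there is a ∈ [0,1) with
|(a-r)/(1-ar)|^p + λ(1-a²)r/((1-ar)(1-2ar)) > 1. -/
theorem bohr_deriv_two_params_sharp
    (p lam : ℝ) (hp0 : 0 < p) (hp1 : p ≤ 1) (hlam : 0 < lam)
    (rlp : ℝ)
    (hrlp : rlp = (-(2 * lam) - p + Real.sqrt (9 * p ^ 2 + 4 * lam * p + 4 * lam ^ 2)) / (4 * p))
    (r : ℝ) (hr1 : rlp < r) (hr2 : r < 1 / 2) :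
    ∃ a : ℝ, 0 ≤ a ∧ a < 1 ∧
      |(a - r) / (1 - a * r)| ^ p +
        lam * (1 - a ^ 2) * r / ((1 - a * r) * (1 - 2 * a * r)) > 1 := by
  set s := Real.sqrt (9 * p ^ 2 + 4 * lam * p + 4 * lam ^ 2) with hs
  have hs0 : 0 ≤ s := Real.sqrt_nonneg _
  have hs2 : s ^ 2 = 9 * p ^ 2 + 4 * lam * p + 4 * lam ^ 2 := by
    rw [hs, Real.sq_sqrt]; positivity
  have hsgt : 2 * lam + p < s := by nlinarith
  have hrlp0 : 0 < rlp := by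
    rw [hrlp]; apply div_pos (by linarith) (by linarith)
  have hr0 : 0 < r := lt_trans hrlp0 hr1
  -- key quadratic inequality
  have hslt : s < 4 * p * r + 2 * lam + p := by
    have := hr1
    rw [hrlp, div_lt_iff₀ (by linarith : (0:ℝ) < 4 * p)] at this
    linarith
  have hkey : 0 < 2 * p * r ^ 2 + (p + 2 * lam) * r - p := by nlinarith
  -- the polynomial whose positivity near a = 1 gives the result
  set N : ℝ → ℝ := fun a =>
    lam * (1 + a) * r * (p * (1 - a * r) + (1 - p) * (a - r))
      - p * (1 + r) * (1 - 2 * a * r) * (1 - a * r) with hN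
  have hN1 : 0 < N 1 := by
    simp only [hN]
    nlinarith [hkey, hr0, hr2]
  have hNc : ContinuousAt N 1 := by fun_prop
  have hmem : N ⁻¹' Set.Ioi 0 ∈ nhds (1:ℝ) := hNc (Ioi_mem_nhds hN1)
  obtain ⟨ε, hε, hball⟩ := Metric.mem_nhds_iff.1 hmem
  set a : ℝ := max ((r + 1) / 2) (1 - ε / 2) with ha
  have har : r < a := lt_max_of_lt_left (by linarith)
  have ha1 : a < 1 := max_lt (by linarith) (by linarith)
  have ha0 : 0 ≤ a := le_trans (by linarith) (le_max_left _ _)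
  have haε : a ∈ Metric.ball (1:ℝ) ε := by
    have h1 : 1 - ε / 2 ≤ a := le_max_right _ _
    simp only [Metric.mem_ball, Real.dist_eq, abs_sub_lt_iff]
    constructor <;> linarith
  have hNa : 0 < N a := hball haε
  refine ⟨a, ha0, ha1, ?_⟩
  -- basic positivity
  have hD1 : 0 < 1 - a * r := by nlinarith
  have hD2 : 0 < 1 - 2 * a * r := by nlinarith
  set t : ℝ := (a - r) / (1 - a * r) with htdef
  have ht0 : 0 < t := div_pos (by linarith) hD1
  have ht1 : t < 1 := by
    rw [htdef, div_lt_one hD1]; nlinarith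
  have htabs : |t| = t := abs_of_pos ht0
  have htD : t * (1 - a * r) = a - r := by
    rw [htdef]; field_simp
  -- AM-GM : t^(1-p) ≤ (1-p)*t + p
  have hgm : t ^ (1 - p) ≤ (1 - p) * t + p := by
    have := Real.geom_mean_le_arith_mean2_weighted (by linarith : (0:ℝ) ≤ 1 - p)
      hp0.le ht0.le (zero_le_one) (by ring)
    simpa using this
  have hE : 0 < (1 - p) * t + p := by nlinarith
  have htq : 0 < t ^ (1 - p) := Real.rpow_pos_of_pos ht0 _
  -- t^p ≥ t / ((1-p)t + p)
  have hrp : t / ((1 - p) * t + p) ≤ t ^ p := by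
    have heq : t ^ p * t ^ (1 - p) = t := by
      rw [← Real.rpow_add ht0]; norm_num
    rw [div_le_iff₀ hE]
    calc t = t ^ p * t ^ (1 - p) := heq.symm
      _ ≤ t ^ p * ((1 - p) * t + p) :=
        mul_le_mul_of_nonneg_left hgm (Real.rpow_nonneg ht0.le p)
  rw [htabs]
  set M : ℝ := lam * (1 - a ^ 2) * r with hM
  have hP : 0 < (a - r) * ((1 - a*r) * (1 - 2*a*r)) + ((1-p)*(a-r) + p*(1-a*r)) * M
      - ((1-p)*(a-r) + p*(1-a*r)) * ((1-a*r) * (1-2*a*r)) := by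
    have hid : (a - r) * ((1 - a*r) * (1 - 2*a*r)) + ((1-p)*(a-r) + p*(1-a*r)) * M
        - ((1-p)*(a-r) + p*(1-a*r)) * ((1-a*r) * (1-2*a*r)) = (1 - a) * N a := by
      simp only [hN, hM]; ring
    rw [hid]; exact mul_pos (by linarith) hNa
  have hG : 0 < t * ((1 - a*r) * (1 - 2*a*r)) + ((1-p)*t + p) * M
      - ((1-p)*t + p) * ((1-a*r) * (1-2*a*r)) := by
    have hmul : (t * ((1 - a*r) * (1 - 2*a*r)) + ((1-p)*t + p) * M
        - ((1-p)*t + p) * ((1-a*r) * (1-2*a*r))) * (1 - a*r)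
        = ((a - r) * ((1 - a*r) * (1 - 2*a*r)) + ((1-p)*(a-r) + p*(1-a*r)) * M
          - ((1-p)*(a-r) + p*(1-a*r)) * ((1-a*r) * (1-2*a*r))) := by
      linear_combination ((1 - a*r) * (1 - 2*a*r) + (1-p) * M
        - (1-p) * ((1-a*r) * (1-2*a*r))) * htD
    have h := hP
    rw [← hmul] at h
    exact (mul_pos_iff_of_pos_right hD1).mp h
  have hmain : 1 < t / ((1 - p) * t + p) + M / ((1 - a * r) * (1 - 2 * a * r)) := by
    rw [div_add_div _ _ (ne_of_gt hE) (ne_of_gt (mul_pos hD1 hD2)),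
      lt_div_iff₀ (mul_pos hE (mul_pos hD1 hD2))]
    linarith [hG]
  calc (1:ℝ) < t / ((1 - p) * t + p) + M / ((1 - a * r) * (1 - 2 * a * r)) := hmain
    _ ≤ t ^ p + M / ((1 - a * r) * (1 - 2 * a * r)) := by linarith
end

section
/- Let t and p be real numbers with 0 < t < 1 and 0 < p ≤ 1. Define R_{t,p} = (1 − t + tp − 2√((1 − t)(tp + 1 − t)))/(tp − 3 + 3t) if t ≠ 3/(p + 3), and R_{t,p} = 1/2 if t = 3/(p + 3). Then for every r with R_{t,p} < r < 1 there exists a ∈ [0,1) such that t ((r + a)/(1 + a r))^p + (1 − t)(a + (1 − a²) r/(1 − a r)) > 1. (This exhibits, via the Möbius map f(z) = (a − z)/(1 − a z) evaluated at z = −r, the sharpness of the radius R_{t,p} in the inequality t |f(z)|^p + (1 − t) ∑_{k=0}^∞ |a_k| r^k ≤ 1.) -/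
/-!
As `a → 1⁻` both `((r + a)/(1 + a r))^p` and `a + (1 - a²) r/(1 - a r)` tend to `1`, so
everything hinges on the first-order behaviour at `a = 1`. Bernoulli's inequality
`x^p ≥ 1 + p (1 - 1/x)` bounds the convex combination below by
`1 + (1 - a) P(a) / ((r + a)(1 - a r))` for a polynomial `P`, and with `S = tp + 1 - t` one has
`S · P(1) = 4 (1 - t) S r² - (S (1 - r))²`. Rationalising the numerator shows that
`R_{t,p} = S / (S + 2 √((1 - t) S))` in both cases of its definition, which is exactly where that
expression changes sign; so `P(1) > 0` for `r > R_{t,p}`, and by continuity `P(a) > 0` for `a`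
slightly below `1`.
-/

open Filter Topology Set

theorem one_add_mul_one_sub_inv_le_rpow {x p : ℝ} (hx : 0 < x) (hp : 0 ≤ p) :
    1 + p * (1 - x⁻¹) ≤ x ^ p :=
  calc 1 + p * (1 - x⁻¹) ≤ Real.log x * p + 1 := by
        nlinarith [Real.one_sub_inv_le_log_of_pos hx]
    _ ≤ x ^ p := by
        rw [Real.rpow_def_of_pos hx]
        exact Real.add_one_le_exp _

namespace BohrSharpness

noncomputable def radius (t p : ℝ) : ℝ :=
  (t * p + 1 - t) / (t * p + 1 - t + 2 * Real.sqrt ((1 - t) * (t * p + 1 - t)))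

/-- The convex combination at `a` is at least
`1 + (1 - a) * excessPoly t p r a / ((r + a) * (1 - a * r))`. -/
def excessPoly (t p r a : ℝ) : ℝ :=
  (1 - t) * (2 * a * r + r - 1) * (r + a) - t * p * (1 - r) * (1 - a * r)

variable {t p r : ℝ}

theorem radius_pos (ht0 : 0 ≤ t) (ht1 : t < 1) (hp : 0 ≤ p) : 0 < radius t p := by
  have hS : 0 < t * p + 1 - t := by nlinarith
  exact div_pos hS (by positivity)

theorem ite_eq_radius (ht0 : 0 ≤ t) (ht1 : t < 1) (hp : 0 ≤ p) :
    (if t = 3 / (p + 3) then 1 / 2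
      else (1 - t + t * p - 2 * Real.sqrt ((1 - t) * (t * p + 1 - t))) / (t * p - 3 + 3 * t)) =
      radius t p := by
  unfold radius
  have hS : 0 < t * p + 1 - t := by nlinarith
  set s := Real.sqrt ((1 - t) * (t * p + 1 - t))
  have hs_sq : s ^ 2 = (1 - t) * (t * p + 1 - t) := Real.sq_sqrt (by nlinarith)
  have hs0 : 0 ≤ s := Real.sqrt_nonneg _
  split_ifs with heq
  · have hc : t * p - 3 + 3 * t = 0 := by
      rw [heq]; field_simp; ring
    have hs_eq : s = 2 * (1 - t) := by nlinarith
    rw [div_eq_div_iff two_ne_zero (by positivity), hs_eq]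
    linarith
  · have hc : t * p - 3 + 3 * t ≠ 0 := fun hc ↦ heq (by field_simp; linarith)
    rw [div_eq_div_iff hc (by positivity)]
    linear_combination (-4) * hs_sq

theorem excessPoly_one_pos (ht0 : 0 ≤ t) (ht1 : t < 1) (hp : 0 ≤ p)
    (hrR : radius t p < r) (hr1 : r < 1) : 0 < excessPoly t p r 1 := by
  have hr0 : 0 < r := (radius_pos ht0 ht1 hp).trans hrR
  unfold radius at hrR
  set S := t * p + 1 - t
  have hS : 0 < S := by nlinarith
  set s := Real.sqrt ((1 - t) * S)
  have hs_sq : s ^ 2 = (1 - t) * S := Real.sq_sqrt (by nlinarith)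
  have hs0 : 0 ≤ s := Real.sqrt_nonneg _
  have hneg : S * (1 - r) - 2 * s * r < 0 := by
    rw [div_lt_iff₀ (by positivity)] at hrR
    linarith
  have hfactor : S * excessPoly t p r 1 =
      -((S * (1 - r) - 2 * s * r) * (S * (1 - r) + 2 * s * r)) := by
    unfold excessPoly
    linear_combination (-4 * r ^ 2) * hs_sq
  have hprod : 0 < S * excessPoly t p r 1 := by
    rw [hfactor, neg_pos]
    exact mul_neg_of_neg_of_pos hneg (by nlinarith)
  exact pos_of_mul_pos_right hprod hS.le

theorem eventually_excessPoly_pos (h : 0 < excessPoly t p r 1) :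
    ∀ᶠ a in 𝓝[<] 1, 0 < excessPoly t p r a := by
  have hcont : Continuous (excessPoly t p r) := by unfold excessPoly; fun_prop
  exact (hcont.tendsto 1).mono_left nhdsWithin_le_nhds |>.eventually_const_lt h

theorem one_lt_convex_combination {a : ℝ} (ht : 0 ≤ t) (hp : 0 ≤ p)
    (hr0 : 0 < r) (hr1 : r < 1) (ha0 : 0 ≤ a) (ha1 : a < 1) (hP : 0 < excessPoly t p r a) :
    1 < t * ((r + a) / (1 + a * r)) ^ p + (1 - t) * (a + (1 - a ^ 2) * r / (1 - a * r)) := by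
  have hra : 0 < r + a := by linarith
  have har : 0 < 1 - a * r := by nlinarith
  have hbernoulli :=
    one_add_mul_one_sub_inv_le_rpow (div_pos hra (by positivity : 0 < 1 + a * r)) hp
  rw [inv_div] at hbernoulli
  have hlower : t * (1 + p * (1 - (1 + a * r) / (r + a))) +
      (1 - t) * (a + (1 - a ^ 2) * r / (1 - a * r)) - 1 =
      (1 - a) * excessPoly t p r a / ((r + a) * (1 - a * r)) := by
    unfold excessPoly
    field_simp
    ring
  have hexcess : 0 < (1 - a) * excessPoly t p r a / ((r + a) * (1 - a * r)) := by
    apply div_pos (mul_pos (by linarith) hP) (mul_pos hra har)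
  nlinarith [mul_le_mul_of_nonneg_left hbernoulli ht]

end BohrSharpness

open BohrSharpness in
theorem bohr_convex_combination_sharp_general
    (t p : ℝ) (ht0 : 0 < t) (ht1 : t < 1) (hp0 : 0 < p)
    (R : ℝ)
    (hR : R = if t = 3 / (p + 3) then 1 / 2
              else (1 - t + t * p - 2 * Real.sqrt ((1 - t) * (t * p + 1 - t))) /
                   (t * p - 3 + 3 * t))
    (r : ℝ) (hrR : R < r) (hr1 : r < 1) :
    ∃ a : ℝ, 0 ≤ a ∧ a < 1 ∧
      t * ((r + a) / (1 + a * r)) ^ p +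
        (1 - t) * (a + (1 - a ^ 2) * r / (1 - a * r)) > 1 := by
  rw [ite_eq_radius ht0.le ht1 hp0.le] at hR
  subst hR
  have hr0 : 0 < r := (radius_pos ht0.le ht1 hp0.le).trans hrR
  have hP1 := excessPoly_one_pos ht0.le ht1 hp0.le hrR hr1
  obtain ⟨a, hPa, ha0, ha1⟩ :=
    ((eventually_excessPoly_pos hP1).and (Ioo_mem_nhdsLT zero_lt_one)).exists
  exact ⟨a, ha0.le, ha1, one_lt_convex_combination ht0.le hp0.le hr0 hr1 ha0.le ha1 hPa⟩

/-- Sharpness of the radius R_{t,p} in the convex-combination Bohr-type inequality: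
for R_{t,p} < r < 1 there is a ∈ [0,1) with
t((r+a)/(1+ar))^p + (1-t)(a + (1-a²)r/(1-ar)) > 1. -/
theorem bohr_convex_combination_sharp
    (t p : ℝ) (ht0 : 0 < t) (ht1 : t < 1) (hp0 : 0 < p) (hp1 : p ≤ 1)
    (R : ℝ)
    (hR : R = if t = 3 / (p + 3) then 1 / 2
              else (1 - t + t * p - 2 * Real.sqrt ((1 - t) * (t * p + 1 - t))) /
                   (t * p - 3 + 3 * t))
    (r : ℝ) (hrR : R < r) (hr1 : r < 1) :
    ∃ a : ℝ, 0 ≤ a ∧ a < 1 ∧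
      t * ((r + a) / (1 + a * r)) ^ p +
        (1 - t) * (a + (1 - a ^ 2) * r / (1 - a * r)) > 1 :=
  bohr_convex_combination_sharp_general t p ht0 ht1 hp0 R hR r hrR hr1
end

section
/- For t ∈ (0,1) define r_{1,t} = (t − 2 + √(9t² − 4t + 4))/(4t) and r_{2,t} = (4 − t − √(t² − 8t + 8))/4, and let t_* be the unique root in (0,1) of t⁴ − 8t³ + 7t² + 4t − 4 = 0. Then r_{1,t} < r_{2,t} for all t ∈ (0, t_*) and r_{1,t} > r_{2,t} for all t ∈ (t_*, 1). -/
private lemma key_lt (t : ℝ) (ht0 : 0 < t) (ht1 : t < 1)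
    (hP : t ^ 4 - 8 * t ^ 3 + 7 * t ^ 2 + 4 * t - 4 < 0) :
    (t - 2 + Real.sqrt (9 * t ^ 2 - 4 * t + 4)) / (4 * t) <
      (4 - t - Real.sqrt (t ^ 2 - 8 * t + 8)) / 4 := by
  have hA : (0:ℝ) ≤ 9 * t ^ 2 - 4 * t + 4 := by nlinarith [sq_nonneg (3*t - 1)]
  have hB : (0:ℝ) ≤ t ^ 2 - 8 * t + 8 := by nlinarith
  set sa := Real.sqrt (9 * t ^ 2 - 4 * t + 4) with hsa
  set sb := Real.sqrt (t ^ 2 - 8 * t + 8) with hsb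
  have hsa2 : sa ^ 2 = 9 * t ^ 2 - 4 * t + 4 := Real.sq_sqrt hA
  have hsb2 : sb ^ 2 = t ^ 2 - 8 * t + 8 := Real.sq_sqrt hB
  have hsa0 : 0 ≤ sa := Real.sqrt_nonneg _
  have hsb0 : 0 ≤ sb := Real.sqrt_nonneg _
  have hD : sa * sb < t ^ 2 - 6 * t + 8 := by
    nlinarith [mul_nonneg hsa0 hsb0, sq_nonneg (sa*sb), hsa2, hsb2,
      sq_nonneg (sa*sb - (t^2 - 6*t + 8))]
  have hM : sa + t * sb < -t ^ 2 + 3 * t + 2 := by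
    have h1 : t * (sa * sb) < t * (t ^ 2 - 6 * t + 8) :=
      mul_lt_mul_of_pos_left hD ht0
    have h2 : t ^ 2 * sb ^ 2 = t ^ 2 * (t ^ 2 - 8 * t + 8) := by rw [hsb2]
    have e : (sa + t * sb) ^ 2 = sa ^ 2 + 2 * (t * (sa * sb)) + t ^ 2 * sb ^ 2 := by
      ring
    have hXsq : (sa + t * sb) ^ 2 < (-t ^ 2 + 3 * t + 2) ^ 2 := by
      rw [e, hsa2, h2]; linarith [h1]
    have hMp : (0:ℝ) < -t ^ 2 + 3 * t + 2 := by nlinarith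
    exact lt_of_pow_lt_pow_left₀ 2 hMp.le hXsq
  rw [div_lt_div_iff₀ (by positivity) (by norm_num)]
  nlinarith [hM]

private lemma key_gt (t : ℝ) (ht0 : 0 < t) (ht1 : t < 1)
    (hP : 0 < t ^ 4 - 8 * t ^ 3 + 7 * t ^ 2 + 4 * t - 4) :
    (4 - t - Real.sqrt (t ^ 2 - 8 * t + 8)) / 4 <
      (t - 2 + Real.sqrt (9 * t ^ 2 - 4 * t + 4)) / (4 * t) := by
  have hA : (0:ℝ) ≤ 9 * t ^ 2 - 4 * t + 4 := by nlinarith [sq_nonneg (3*t - 1)]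
  have hB : (0:ℝ) ≤ t ^ 2 - 8 * t + 8 := by nlinarith
  set sa := Real.sqrt (9 * t ^ 2 - 4 * t + 4) with hsa
  set sb := Real.sqrt (t ^ 2 - 8 * t + 8) with hsb
  have hsa2 : sa ^ 2 = 9 * t ^ 2 - 4 * t + 4 := Real.sq_sqrt hA
  have hsb2 : sb ^ 2 = t ^ 2 - 8 * t + 8 := Real.sq_sqrt hB
  have hsa0 : 0 ≤ sa := Real.sqrt_nonneg _
  have hsb0 : 0 ≤ sb := Real.sqrt_nonneg _
  have hD : t ^ 2 - 6 * t + 8 < sa * sb := by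
    nlinarith [mul_nonneg hsa0 hsb0, hsa2, hsb2,
      sq_nonneg (sa*sb - (t^2 - 6*t + 8))]
  have hM : -t ^ 2 + 3 * t + 2 < sa + t * sb := by
    have h1 : t * (t ^ 2 - 6 * t + 8) < t * (sa * sb) :=
      mul_lt_mul_of_pos_left hD ht0
    have h2 : t ^ 2 * sb ^ 2 = t ^ 2 * (t ^ 2 - 8 * t + 8) := by rw [hsb2]
    have e : (sa + t * sb) ^ 2 = sa ^ 2 + 2 * (t * (sa * sb)) + t ^ 2 * sb ^ 2 := by
      ring
    have hXsq : (-t ^ 2 + 3 * t + 2) ^ 2 < (sa + t * sb) ^ 2 := by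
      rw [e, hsa2, h2]; linarith [h1]
    have hX : 0 ≤ sa + t * sb := by positivity
    exact lt_of_pow_lt_pow_left₀ 2 hX hXsq
  rw [div_lt_div_iff₀ (by norm_num) (by positivity)]
  nlinarith [hM]

/-- Comparison of the two radii r_{1,t} = (t - 2 + √(9t² - 4t + 4))/(4t) and
r_{2,t} = (4 - t - √(t² - 8t + 8))/4: r_{1,t} < r_{2,t} on (0, t_*) and
r_{1,t} > r_{2,t} on (t_*, 1), where t_* is the unique root in (0,1) of
t⁴ - 8t³ + 7t² + 4t - 4 = 0. -/
theorem radii_comparison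
    (ts : ℝ) (hts : ts ∈ Set.Ioo (0 : ℝ) 1)
    (htsroot : ts ^ 4 - 8 * ts ^ 3 + 7 * ts ^ 2 + 4 * ts - 4 = 0)
    (htsuniq : ∀ s ∈ Set.Ioo (0 : ℝ) 1,
      s ^ 4 - 8 * s ^ 3 + 7 * s ^ 2 + 4 * s - 4 = 0 → s = ts) :
    (∀ t ∈ Set.Ioo (0 : ℝ) ts,
      (t - 2 + Real.sqrt (9 * t ^ 2 - 4 * t + 4)) / (4 * t) <
      (4 - t - Real.sqrt (t ^ 2 - 8 * t + 8)) / 4) ∧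
    (∀ t ∈ Set.Ioo ts 1,
      (4 - t - Real.sqrt (t ^ 2 - 8 * t + 8)) / 4 <
      (t - 2 + Real.sqrt (9 * t ^ 2 - 4 * t + 4)) / (4 * t)) := by
  obtain ⟨hts0, hts1⟩ := hts
  have hQts : ts ^ 3 - 7 * ts ^ 2 + 4 = 0 := by
    have h : (ts - 1) * (ts ^ 3 - 7 * ts ^ 2 + 4) = 0 := by linear_combination htsroot
    rcases mul_eq_zero.mp h with h' | h'
    · linarith
    · exact h'
  constructor
  · intro t ⟨ht0, hlt⟩
    have ht1 : t < 1 := lt_trans hlt hts1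
    have hQ : 0 < t ^ 3 - 7 * t ^ 2 + 4 := by
      nlinarith [mul_pos (sub_pos.mpr hlt)
        (show (0:ℝ) < 7 * (t + ts) - (t ^ 2 + t * ts + ts ^ 2) by nlinarith)]
    apply key_lt t ht0 ht1
    nlinarith [mul_pos (show (0:ℝ) < 1 - t by linarith) hQ]
  · intro t ⟨hlt, ht1⟩
    have ht0 : 0 < t := lt_trans hts0 hlt
    have hQ : t ^ 3 - 7 * t ^ 2 + 4 < 0 := by
      nlinarith [mul_pos (sub_pos.mpr hlt)
        (show (0:ℝ) < 7 * (t + ts) - (t ^ 2 + t * ts + ts ^ 2) by nlinarith)]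
    apply key_gt t ht0 ht1
    nlinarith [mul_pos (show (0:ℝ) < 1 - t by linarith) (show (0:ℝ) < -(t ^ 3 - 7 * t ^ 2 + 4) by linarith)]
end

section
/- Let p and λ be real numbers with 1 < p ≤ 3/2 and 0 < λ ≤ 9p/10. Define R_{λ,p} = (−p − λ + √(λ² + 4pλ))/(2λ − p) if p ≠ 2λ, and R_{λ,p} = 1/3 if p = 2λ. Then R_{λ,p} ≥ 1/4. -/
/-- For 1 < p ≤ 3/2 and 0 < λ ≤ 9p/10, the radius R_{λ,p} satisfies R_{λ,p} ≥ 1/4. -/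
theorem R_ge_one_quarter
    (p lam : ℝ) (hp1 : 1 < p) (hp2 : p ≤ 3 / 2) (hlam : 0 < lam) (hlam2 : lam ≤ 9 * p / 10)
    (R : ℝ)
    (hR : R = if p = 2 * lam then 1 / 3
              else (-p - lam + Real.sqrt (lam ^ 2 + 4 * p * lam)) / (2 * lam - p)) :
    1 / 4 ≤ R := by
  by_cases h : p = 2 * lam
  · rw [hR, if_pos h]; norm_num
  · rw [hR, if_neg h]
    have hp0 : 0 < p := by linarith
    have h910 : 10 * lam ≤ 9 * p := by linarith
    have hnn : (0:ℝ) ≤ lam ^ 2 + 4 * p * lam := by nlinarith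
    set s := Real.sqrt (lam ^ 2 + 4 * p * lam) with hs
    rcases lt_or_gt_of_ne h with hlt | hgt
    · -- p < 2λ, so 2λ - p > 0; need s ≥ (3p+6λ)/4
      have hd : 0 < 2 * lam - p := by linarith
      have hsge : (3 * p + 6 * lam) / 4 ≤ s := by
        rw [hs]
        have h2 := Real.sqrt_le_sqrt (show ((3 * p + 6 * lam) / 4) ^ 2 ≤ lam ^ 2 + 4 * p * lam by nlinarith)
        rwa [Real.sqrt_sq (by linarith)] at h2
      rw [le_div_iff₀ hd]
      linarith
    · -- p > 2λ, so 2λ - p < 0; need s ≤ (3p+6λ)/4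
      have hd : 2 * lam - p < 0 := by linarith
      have hsle : s ≤ (3 * p + 6 * lam) / 4 := by
        rw [hs]
        have := Real.sqrt_le_sqrt (show lam ^ 2 + 4 * p * lam ≤ ((3 * p + 6 * lam) / 4) ^ 2 by nlinarith)
        calc Real.sqrt (lam ^ 2 + 4 * p * lam) ≤ Real.sqrt (((3 * p + 6 * lam) / 4) ^ 2) := this
          _ = (3 * p + 6 * lam) / 4 := Real.sqrt_sq (by linarith)
      rw [le_div_iff_of_neg hd]
      linarith
end
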